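/- Let n ≥ 3 and let k be an integer with 2 ≤ k ≤ n-2. Let Q₁ be the quotient topological space of (S^k × D^{n-1-k}) × [0,1] by the equivalence relation generated by ((z,y),t) ~ ((z,y),t') for all z ∈ S^k, y ∈ D^{n-1-k} with ‖y‖ = 1, t,t' ∈ [0,1], and ((z,x),1) ~ ((z,x),0) for all (z,x) ∈ S^k × D^{n-1-k}. Let Q₂ be the quotient topological space of (S^{n-k} × D^{k-1}) × [0,1] by the equivalence relation generated by ((w,y),t) ~ ((w,y),t') for all w ∈ S^{n-k}, y ∈ D^{k-1} with ‖y‖ = 1, t,t' ∈ [0,1], and ((w,x),1) ~ ((w,x),0) for all (w,x) ∈ S^{n-k} × D^{k-1}. Then Q₁ is homeomorphic to Q₂. -/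

import Mathlib

/-!
Rotating the disk `D^m` once about its boundary sphere sweeps out `S^{m+1}`: the map
`(y, t) ↦ (y, √(1 - ‖y‖²) e^{iπ(2t - 1)})` from `D^m × [0,1]` onto the unit sphere of `ℝ^m × ℂ`
identifies exactly the points glued by the open book relation. Being a continuous bijection from
a compact space to a Hausdorff one, the induced map exhibits the open book with page
`S^k × D^m` and trivial monodromy as `S^k × S^{m+1}`. Both books in the theorem are thus
`S^k × S^{n-k}`, up to swapping the factors.
-/

open Metric unitInterval

noncomputable section

/-- The closed unit ball (disk) in `EuclideanSpace ℝ (Fin m)`. -/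
def Disk (m : ℕ) : Set (EuclideanSpace ℝ (Fin m)) := Metric.closedBall 0 1

/-- The unit sphere of dimension `m` in `EuclideanSpace ℝ (Fin (m+1))`. -/
def Sph (m : ℕ) : Set (EuclideanSpace ℝ (Fin (m + 1))) := Metric.sphere 0 1

/-- The relation generating the open book quotient on the page `S^k × D^m` with trivial
monodromy: `((z,y),t) ~ ((z,y),t')` for `‖y‖ = 1` and `((z,x),1) ~ ((z,x),0)`. -/
def obRelSD (k m : ℕ) (p q : (↥(Sph k) × ↥(Disk m)) × I) : Prop :=
  (p.1 = q.1 ∧ ‖(p.1.2 : EuclideanSpace ℝ (Fin m))‖ = 1) ∨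
  (p.1 = q.1 ∧ p.2 = 1 ∧ q.2 = 0)

def Continuous.quotHomeomorphOfCompactToT2 {X Y : Type*} [TopologicalSpace X] [CompactSpace X]
    [TopologicalSpace Y] [T2Space Y] {r : X → X → Prop} {f : X → Y} (hf : Continuous f)
    (hsurj : Function.Surjective f) (hresp : ∀ x y, r x y → f x = f y)
    (hfib : ∀ x y, f x = f y → Relation.EqvGen r x y) :
    Quot r ≃ₜ Y :=
  have hlift : Function.Bijective (Quot.lift f hresp) :=
    ⟨fun a b ↦ Quot.induction_on₂ a b fun x y h ↦ Quot.eqvGen_sound (hfib x y h),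
      fun y ↦ (hsurj y).elim fun x hx ↦ ⟨Quot.mk r x, hx⟩⟩
  (continuous_quot_lift _ hf).homeoOfEquivCompactToT2 (f := .ofBijective _ hlift)

def unitSphereHomeomorphOfFinrankEq (𝕜 : Type*) [RCLike 𝕜] {E F : Type*} [NormedAddCommGroup E]
    [InnerProductSpace 𝕜 E] [FiniteDimensional 𝕜 E] [NormedAddCommGroup F] [InnerProductSpace 𝕜 F]
    [FiniteDimensional 𝕜 F] (h : Module.finrank 𝕜 E = Module.finrank 𝕜 F) :
    sphere (0 : E) 1 ≃ₜ sphere (0 : F) 1 :=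
  ((stdOrthonormalBasis 𝕜 E).equiv (stdOrthonormalBasis 𝕜 F) (finCongr h)).toHomeomorph.subtype
    fun x ↦ by simp

lemma finrank_withLp_prod_complex (E : Type*) [AddCommGroup E] [Module ℝ E]
    [Module.Finite ℝ E] : Module.finrank ℝ (WithLp 2 (E × ℂ)) = Module.finrank ℝ E + 2 := by
  rw [(WithLp.linearEquiv 2 ℝ _).finrank_eq, Module.finrank_prod, Complex.finrank_real_complex]

open Real

def circleLoop (t : ℝ) : Circle := Circle.exp (π * (2 * t - 1))

lemma circleLoop_one : circleLoop 1 = circleLoop 0 :=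
  Circle.exp_eq_exp.2 ⟨1, by ring⟩

lemma eq_or_endpoints_of_circleLoop_eq {t t' : ℝ} (ht : t ∈ I) (ht' : t' ∈ I)
    (h : circleLoop t = circleLoop t') : t = t' ∨ (t = 1 ∧ t' = 0) ∨ (t = 0 ∧ t' = 1) := by
  obtain ⟨m, hm⟩ := Circle.exp_eq_exp.1 h
  have hdiff : t = t' + m := by
    have : π * (2 * t) = π * (2 * (t' + m)) := by linear_combination hm
    linarith [mul_left_cancel₀ pi_ne_zero this]
  obtain ⟨ht0, ht1⟩ := ht
  obtain ⟨ht0', ht1'⟩ := ht'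
  have hm1 : m ≤ 1 := by exact_mod_cast (show (m : ℝ) ≤ 1 by linarith)
  have hm2 : -1 ≤ m := by exact_mod_cast (show (-1 : ℝ) ≤ m by linarith)
  interval_cases m
  · right; right; constructor <;> push_cast at hdiff <;> linarith
  · left; simpa using hdiff
  · right; left; constructor <;> push_cast at hdiff <;> linarith

lemma exists_circleLoop_eq (z : Circle) : ∃ t ∈ I, circleLoop t = z := by
  obtain ⟨θ, ⟨hθ₁, hθ₂⟩, rfl⟩ := Circle.surjOn_exp_neg_pi_pi (Set.mem_univ z)
  refine ⟨(θ + π) / (2 * π),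
    ⟨div_nonneg (by linarith) (by positivity), (div_le_one (by positivity)).2 (by linarith)⟩, ?_⟩
  rw [circleLoop]
  congr 1
  field_simp
  ring

section DiskSpin

variable {E : Type*} [NormedAddCommGroup E]

def diskSpin (y : E) (t : ℝ) : WithLp 2 (E × ℂ) :=
  WithLp.toLp 2 (y, (√(1 - ‖y‖ ^ 2) : ℂ) * circleLoop t)

lemma norm_diskSpin {y : E} (hy : ‖y‖ ≤ 1) (t : ℝ) : ‖diskSpin y t‖ = 1 := by
  have hsq : ‖diskSpin y t‖ ^ 2 = 1 := by
    have h : 0 ≤ 1 - ‖y‖ ^ 2 := by nlinarith [norm_nonneg y]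
    rw [WithLp.prod_norm_sq_eq_of_L2]
    simp only [diskSpin, WithLp.toLp_fst, WithLp.toLp_snd, norm_mul, Complex.norm_real,
      Real.norm_eq_abs, Circle.norm_coe, mul_one, sq_abs, Real.sq_sqrt h]
    ring
  exact (pow_eq_one_iff_of_nonneg (norm_nonneg _) two_ne_zero).1 hsq

lemma diskSpin_of_norm_eq_one {y : E} (hy : ‖y‖ = 1) (t t' : ℝ) :
    diskSpin y t = diskSpin y t' := by
  simp [diskSpin, hy]

lemma diskSpin_one (y : E) : diskSpin y 1 = diskSpin y 0 := by
  simp [diskSpin, circleLoop_one]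

lemma eq_and_of_diskSpin_eq {y y' : E} {t t' : ℝ} (hy : ‖y‖ ≤ 1) (ht : t ∈ I) (ht' : t' ∈ I)
    (h : diskSpin y t = diskSpin y' t') :
    y = y' ∧ (‖y‖ = 1 ∨ t = t' ∨ (t = 1 ∧ t' = 0) ∨ (t = 0 ∧ t' = 1)) := by
  obtain rfl : y = y' := congrArg (·.fst) h
  refine ⟨rfl, (eq_or_lt_of_le hy).imp id fun hlt ↦ eq_or_endpoints_of_circleLoop_eq ht ht' ?_⟩
  have hr : (√(1 - ‖y‖ ^ 2) : ℂ) ≠ 0 := by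
    exact_mod_cast (Real.sqrt_pos.2 (by nlinarith [norm_nonneg y])).ne'
  exact Circle.ext (mul_left_cancel₀ hr (congrArg (·.snd) h))

lemma exists_diskSpin_eq {v : WithLp 2 (E × ℂ)} (hv : ‖v‖ = 1) :
    ∃ y : E, ‖y‖ ≤ 1 ∧ ∃ t ∈ I, diskSpin y t = v := by
  have hsq : ‖v.fst‖ ^ 2 + ‖v.snd‖ ^ 2 = 1 := by
    rw [← WithLp.prod_norm_sq_eq_of_L2, hv, one_pow]
  obtain ⟨t, ht, hloop⟩ := exists_circleLoop_eq (Circle.exp (Complex.arg v.snd))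
  refine ⟨v.fst, by nlinarith [norm_nonneg v.snd, norm_nonneg v.fst], t, ht, ?_⟩
  have hr : √(1 - ‖v.fst‖ ^ 2) = ‖v.snd‖ := by
    rw [← Real.sqrt_sq (norm_nonneg v.snd)]
    congr 1
    linarith
  rw [diskSpin, hloop, hr, Circle.coe_exp, Complex.norm_mul_exp_arg_mul_I]
  rfl

end DiskSpin

instance (k : ℕ) : CompactSpace (Sph k) :=
  isCompact_iff_compactSpace.1 (isCompact_sphere _ _)

instance (m : ℕ) : CompactSpace (Disk m) :=
  isCompact_iff_compactSpace.1 (isCompact_closedBall _ _)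

def openBookMap (k m : ℕ) (p : (Sph k × Disk m) × I) :
    Sph k × sphere (0 : WithLp 2 (EuclideanSpace ℝ (Fin m) × ℂ)) 1 :=
  (p.1.1, ⟨diskSpin (p.1.2 : EuclideanSpace ℝ (Fin m)) p.2,
    mem_sphere_zero_iff_norm.2 (norm_diskSpin (mem_closedBall_zero_iff.1 p.1.2.2) _)⟩)

lemma continuous_openBookMap (k m : ℕ) : Continuous (openBookMap k m) := by
  unfold openBookMap diskSpin; fun_prop

lemma surjective_openBookMap (k m : ℕ) : Function.Surjective (openBookMap k m) := by
  rintro ⟨z, v, hv⟩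
  obtain ⟨y, hy, t, ht, rfl⟩ := exists_diskSpin_eq (mem_sphere_zero_iff_norm.1 hv)
  exact ⟨((z, ⟨y, mem_closedBall_zero_iff.2 hy⟩), ⟨t, ht⟩), rfl⟩

lemma openBookMap_eq_of_obRelSD {k m : ℕ} (p q : (Sph k × Disk m) × I) (h : obRelSD k m p q) :
    openBookMap k m p = openBookMap k m q := by
  obtain ⟨⟨z, y⟩, t⟩ := p
  obtain ⟨⟨z', y'⟩, t'⟩ := q
  rcases h with ⟨hzy, hy⟩ | ⟨hzy, rfl, rfl⟩ <;> cases hzy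
  · exact Prod.ext rfl (Subtype.ext (diskSpin_of_norm_eq_one hy _ _))
  · exact Prod.ext rfl (Subtype.ext (diskSpin_one _))

lemma obRelSD_eqvGen_of_openBookMap_eq {k m : ℕ} (p q : (Sph k × Disk m) × I)
    (h : openBookMap k m p = openBookMap k m q) : Relation.EqvGen (obRelSD k m) p q := by
  obtain ⟨⟨z, y⟩, t⟩ := p
  obtain ⟨⟨z', y'⟩, t'⟩ := q
  obtain rfl : z = z' := congrArg Prod.fst h
  obtain ⟨hy, hcases⟩ := eq_and_of_diskSpin_eq (mem_closedBall_zero_iff.1 y.2) t.2 t'.2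
    (congrArg (fun x ↦ x.2.1) h)
  obtain rfl : y = y' := Subtype.ext hy
  rcases hcases with hy1 | htt | ⟨ht1, ht0⟩ | ⟨ht0, ht1⟩
  · exact .rel _ _ (.inl ⟨rfl, hy1⟩)
  · obtain rfl : t = t' := Subtype.ext htt
    exact .refl _
  · exact .rel _ _ (.inr ⟨rfl, Subtype.ext ht1, Subtype.ext ht0⟩)
  · exact .symm _ _ (.rel _ _ (.inr ⟨rfl, Subtype.ext ht1, Subtype.ext ht0⟩))

def openBookHomeomorph (k m : ℕ) :
    Quot (obRelSD k m) ≃ₜ Sph k × sphere (0 : WithLp 2 (EuclideanSpace ℝ (Fin m) × ℂ)) 1 :=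
  (continuous_openBookMap k m).quotHomeomorphOfCompactToT2 (surjective_openBookMap k m)
    openBookMap_eq_of_obRelSD obRelSD_eqvGen_of_openBookMap_eq

theorem openBook_page_exchange_general (n k : ℕ) (hk1 : 2 ≤ k) (hk2 : k ≤ n - 2) :
    Nonempty (Quot (obRelSD k (n - 1 - k)) ≃ₜ Quot (obRelSD (n - k) (k - 1))) := by
  have e₁ : sphere (0 : WithLp 2 (EuclideanSpace ℝ (Fin (n - 1 - k)) × ℂ)) 1 ≃ₜ Sph (n - k) :=
    unitSphereHomeomorphOfFinrankEq ℝ <| by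
      rw [finrank_withLp_prod_complex, finrank_euclideanSpace_fin, finrank_euclideanSpace_fin]
      omega
  have e₂ : Sph k ≃ₜ sphere (0 : WithLp 2 (EuclideanSpace ℝ (Fin (k - 1)) × ℂ)) 1 :=
    unitSphereHomeomorphOfFinrankEq ℝ <| by
      rw [finrank_withLp_prod_complex, finrank_euclideanSpace_fin, finrank_euclideanSpace_fin]
      omega
  exact ⟨(openBookHomeomorph k _).trans <| (Homeomorph.prodComm _ _).trans <|
    (e₁.prodCongr e₂).trans (openBookHomeomorph (n - k) (k - 1)).symm⟩

/-- Page exchange: `Ob(S^k × D^{n-1-k}, id)` and `Ob(S^{n-k} × D^{k-1}, id)` are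
homeomorphic. -/
theorem openBook_page_exchange (n k : ℕ) (hn : 3 ≤ n) (hk1 : 2 ≤ k) (hk2 : k ≤ n - 2) :
    Nonempty (Quot (obRelSD k (n - 1 - k)) ≃ₜ Quot (obRelSD (n - k) (k - 1))) :=
  openBook_page_exchange_general n k hk1 hk2
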